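/- Let N be a prime, let s ≥ t ≥ 1 be integers, and let (f_ω)_{ω∈{0,1}^s, |ω|≤t} be one-bounded functions on ℤ/Nℤ. Then for every ω' ∈ {0,1}^s with |ω'| = t, one has |Λ¹_{s,t}((f_ω))| ≤ ‖f_{ω'}‖_{U^t}. -/

import Mathlib

open Finset

noncomputable section

/-- The number of nonzero coordinates of `ω ∈ {0,1}^s`. -/
def wt {s : ℕ} (ω : Fin s → Bool) : ℕ := (Finset.univ.filter fun i => ω i = true).card

/-- `C^k z`: complex conjugation applied `k` times. -/
def cconj (k : ℕ) (z : ℂ) : ℂ := if Even k then z else (starRingEnd ℂ) z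

/-- The Gowers `U^t` norm of `f : ZMod N → ℂ`. -/
def gowers {N : ℕ} [NeZero N] (t : ℕ) (f : ZMod N → ℂ) : ℝ :=
  (norm ((∑ x : ZMod N, ∑ h : Fin t → ZMod N,
      ∏ ω : Fin t → Bool,
        cconj (wt ω) (f (x + ∑ i, if ω i then h i else 0))) / (N : ℂ) ^ (t + 1))) ^
    (((2 : ℝ) ^ t)⁻¹)

/-- `Λ¹_{s,t}((f_ω)) = 𝔼_{x,h₁,…,h_s} ∏_{ω∈{0,1}^s : |ω| ≤ t} f_ω(x + ω·h)`. -/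
def Lam1st {N : ℕ} [NeZero N] (s t : ℕ) (f : (Fin s → Bool) → ZMod N → ℂ) : ℂ :=
  (∑ x : ZMod N, ∑ h : Fin s → ZMod N,
    ∏ ω ∈ Finset.univ.filter (fun ω : Fin s → Bool => wt ω ≤ t),
      f ω (x + ∑ i, if ω i then h i else 0)) / (N : ℂ) ^ (s + 1)

/-!
Let `T = {i | ω'ᵢ = 1}`, so `|T| = t`. For a set `S` of coordinates let `Q_S` (`doubledAvg`) be
the average over `x, h, h'` of `∏_{ε ⊆ S} C^{|ε|} ∏_{ω ⊇ S, |ω| ≤ t} f_ω(x + ω·y_ε)`, where `y_ε`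
agrees with `h'` on `ε` and with `h` elsewhere; `Q_∅ = Λ¹_{s,t}`. For `i ∉ S` the factors with
`ωᵢ = 0` do not depend on `hᵢ` and are one-bounded, so Cauchy–Schwarz in `hᵢ` gives
`|Q_S|² ≤ |Q_{S ∪ {i}}|`, and iterating over `T` gives `|Λ|^{2^t} ≤ |Q_T|`. As `ω'` is the only
`ω ⊇ T` with `|ω| ≤ t`, the substitution `h' = h + k` turns `Q_T` into `‖f_{ω'}‖_{U^t}^{2^t}`.
-/

open Function
open scoped BigOperators

lemma cconj_zero (z : ℂ) : cconj 0 z = z := by simp [cconj]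

lemma cconj_add_one (k : ℕ) (z : ℂ) : cconj (k + 1) z = starRingEnd ℂ (cconj k z) := by
  rcases Nat.even_or_odd k with hk | hk
  · simp [cconj, hk, Nat.even_add_one]
  · simp [cconj, Nat.even_add_one, Nat.not_even_iff_odd.2 hk]

lemma cconj_mul (k : ℕ) (z w : ℂ) : cconj k (z * w) = cconj k z * cconj k w := by
  unfold cconj; split_ifs <;> simp

lemma norm_cconj (k : ℕ) (z : ℂ) : ‖cconj k z‖ = ‖z‖ := by
  unfold cconj; split_ifs <;> simp

namespace Fintype

variable {ι κ G M : Type*} [Fintype ι] [DecidableEq ι] [Fintype G] [AddCommMonoid M]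
  [Module ℚ≥0 M]

lemma expect_expect_update [Nonempty G] (F : (ι → G) → M) (i : ι) :
    𝔼 h, 𝔼 v, F (update h i v) = 𝔼 h, F h := by
  let e : (ι → G) × G ≃ (ι → G) × G :=
    { toFun p := (update p.1 i p.2, p.1 i)
      invFun p := (update p.1 i p.2, p.1 i)
      left_inv p := by simp
      right_inv p := by simp }
  calc 𝔼 h, 𝔼 v, F (update h i v) = 𝔼 p : (ι → G) × G, F (update p.1 i p.2) := by
        rw [← univ_product_univ, expect_product (f := fun p => F (update p.1 i p.2))]
    _ = 𝔼 p : (ι → G) × G, F p.1 := Fintype.expect_equiv e _ _ fun _ => rfl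
    _ = 𝔼 h, F h := by
        rw [← univ_product_univ, expect_product (f := fun p => F p.1)]
        simp only [Fintype.expect_const]

lemma expect_comp_of_injective [Fintype κ] [DecidableEq κ] [AddCommGroup G] {e : ι → κ}
    (he : Injective e) (F : (ι → G) → M) : 𝔼 k : κ → G, F (k ∘ e) = 𝔼 k : ι → G, F k := by
  -- shifting `k` by an extension of `u` shifts `k ∘ e` by `u`
  calc 𝔼 k : κ → G, F (k ∘ e)
      = 𝔼 u : ι → G, 𝔼 k : κ → G, F ((k + extend e u 0) ∘ e) := by
        refine (expect_const _).symm.trans (expect_congr rfl fun u _ => ?_)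
        exact Fintype.expect_equiv (Equiv.subRight (extend e u 0)) _ _ fun _ => by simp
    _ = 𝔼 k : κ → G, 𝔼 u : ι → G, F (k ∘ e + u) := by
        rw [expect_comm]
        simp only [Pi.add_comp, extend_comp he]
    _ = 𝔼 k : ι → G, F k := by
        refine (expect_congr rfl fun k _ => ?_).trans (expect_const _)
        exact Fintype.expect_equiv (Equiv.addLeft (k ∘ e)) _ _ fun _ => rfl

end Fintype

lemma conj_expect {ι : Type*} (s : Finset ι) (f : ι → ℂ) :
    starRingEnd ℂ (𝔼 i ∈ s, f i) = 𝔼 i ∈ s, starRingEnd ℂ (f i) := by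
  simp [expect_eq_sum_div_card, map_sum, map_div₀]

lemma sq_norm_expect_le {ι 𝕜 : Type*} [Fintype ι] [RCLike 𝕜] (z : ι → 𝕜) :
    ‖𝔼 i, z i‖ ^ 2 ≤ 𝔼 i, ‖z i‖ ^ 2 := by
  cases isEmpty_or_nonempty ι
  · simp [Finset.univ_eq_empty]
  calc ‖𝔼 i, z i‖ ^ 2 ≤ (𝔼 i, 1 * ‖z i‖) ^ 2 := by
        simpa using pow_le_pow_left₀ (norm_nonneg _) (RCLike.norm_expect_le (K := 𝕜)) 2
    _ ≤ (𝔼 _i : ι, (1 : ℝ) ^ 2) * 𝔼 i, ‖z i‖ ^ 2 := expect_mul_sq_le_sq_mul_sq _ _ _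
    _ = 𝔼 i, ‖z i‖ ^ 2 := by simp

section CubeProd

variable {ι G : Type*} [DecidableEq ι]

def cubeProd (S : Finset ι) (F : (ι → G) → ℂ) (h h' : ι → G) : ℂ :=
  ∏ ε ∈ S.powerset, cconj #ε (F (ε.piecewise h' h))

variable {S : Finset ι} {i : ι}

lemma cubeProd_empty (F : (ι → G) → ℂ) (h h' : ι → G) : cubeProd ∅ F h h' = F h := by
  simp [cubeProd, cconj_zero]

lemma cubeProd_mul (S : Finset ι) (F₁ F₂ : (ι → G) → ℂ) (h h' : ι → G) :
    cubeProd S (F₁ * F₂) h h' = cubeProd S F₁ h h' * cubeProd S F₂ h h' := by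
  simp only [cubeProd, Pi.mul_apply, cconj_mul, prod_mul_distrib]

lemma norm_cubeProd_le_one {F : (ι → G) → ℂ} (hF : ∀ y, ‖F y‖ ≤ 1) (h h' : ι → G) :
    ‖cubeProd S F h h'‖ ≤ 1 := by
  rw [cubeProd, norm_prod]
  exact prod_le_one (fun _ _ => norm_nonneg _) fun ε _ => (norm_cconj _ _).trans_le (hF _)

lemma cubeProd_update_left (hi : i ∉ S) {F : (ι → G) → ℂ} (hF : ∀ y v, F (update y i v) = F y)
    (h h' : ι → G) (v : G) : cubeProd S F (update h i v) h' = cubeProd S F h h' := by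
  refine prod_congr rfl fun ε hε => ?_
  rw [← ε.update_piecewise_of_notMem _ _ (notMem_mono (mem_powerset.1 hε) hi), hF]

lemma cubeProd_update_right (hi : i ∉ S) (F : (ι → G) → ℂ) (h h' : ι → G) (v : G) :
    cubeProd S F h (update h' i v) = cubeProd S F h h' := by
  refine prod_congr rfl fun ε hε => ?_
  congr 2
  refine ε.piecewise_congr (fun j hj => update_of_ne ?_ _ _) fun _ _ => rfl
  exact ne_of_mem_of_not_mem hj (notMem_mono (mem_powerset.1 hε) hi)

lemma cubeProd_insert (hi : i ∉ S) (F : (ι → G) → ℂ) (h h' : ι → G) :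
    cubeProd (insert i S) F h h' =
      cubeProd S F h h' * starRingEnd ℂ (cubeProd S F (update h i (h' i)) h') := by
  rw [cubeProd, prod_powerset_insert hi, cubeProd, cubeProd, map_prod]
  congr 1
  refine prod_congr rfl fun ε hε => ?_
  have hiε : i ∉ ε := notMem_mono (mem_powerset.1 hε) hi
  rw [card_insert_of_notMem hiε, cconj_add_one, piecewise_insert,
    ε.update_piecewise_of_notMem _ _ hiε]

end CubeProd

def ones {ι : Type*} [Fintype ι] (ω : ι → Bool) : Finset ι := univ.filter fun i => ω i = true

@[simp]
lemma mem_ones {ι : Type*} [Fintype ι] {ω : ι → Bool} {i : ι} : i ∈ ones ω ↔ ω i = true := by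
  simp [ones]

lemma prod_powerset_map_univ {ι κ M : Type*} [Fintype κ] [DecidableEq κ] [DecidableEq ι]
    [CommMonoid M] (e : κ ↪ ι) (W : Finset ι → M) :
    ∏ ε ∈ (univ.map e).powerset, W ε = ∏ η : κ → Bool, W ((ones η).map e) := by
  have hinv : ∀ ε ∈ (univ.map e).powerset, (ones fun j => decide (e j ∈ ε)).map e = ε := by
    intro ε hε
    ext i
    constructor
    · simp only [mem_map, mem_ones, decide_eq_true_eq]
      rintro ⟨j, hj, rfl⟩
      exact hj
    · intro hi
      obtain ⟨j, -, rfl⟩ := mem_map.1 (mem_powerset.1 hε hi)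
      simpa using hi
  refine prod_nbij' (fun ε j => decide (e j ∈ ε)) (fun η => (ones η).map e)
    (fun _ _ => mem_univ _) (fun η _ => ?_) hinv (fun η _ => ?_) (fun ε hε => by rw [hinv ε hε])
  · simp only [mem_powerset, map_subset_map, subset_univ]
  · ext j
    simp

section Patterns

variable {G : Type*} [AddCommGroup G] {s t : ℕ}

def dot (ω : Fin s → Bool) (h : Fin s → G) : G := ∑ i, if ω i then h i else 0

lemma card_ones (ω : Fin s → Bool) : #(ones ω) = wt ω := rfl

lemma dot_eq_sum_ones (ω : Fin s → Bool) (h : Fin s → G) : dot ω h = ∑ i ∈ ones ω, h i :=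
  (sum_filter _ _).symm

lemma dot_update_of_false {ω : Fin s → Bool} {i : Fin s} (hi : ω i = false) (h : Fin s → G)
    (v : G) : dot ω (update h i v) = dot ω h := by
  refine sum_congr rfl fun j _ => ?_
  rcases eq_or_ne j i with rfl | hj
  · simp [hi]
  · rw [update_of_ne hj]

lemma dot_piecewise {ω : Fin s → Bool} {ε : Finset (Fin s)} (hε : ε ⊆ ones ω) (h h' : Fin s → G) :
    dot ω (ε.piecewise h' h) = dot ω h + ∑ j ∈ ε, (h' j - h j) := by
  rw [dot_eq_sum_ones, dot_eq_sum_ones, sum_piecewise, inter_eq_right.2 hε, sum_sub_distrib,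
    ← sum_sdiff hε (f := h)]
  abel

def patternsAbove (t : ℕ) (S : Finset (Fin s)) : Finset (Fin s → Bool) :=
  univ.filter fun ω => wt ω ≤ t ∧ S ⊆ ones ω

lemma patternsAbove_insert (S : Finset (Fin s)) (i : Fin s) :
    patternsAbove t (insert i S) = (patternsAbove t S).filter fun ω => ω i = true := by
  ext ω
  simp only [patternsAbove, mem_filter, mem_univ, true_and, insert_subset_iff, mem_ones]
  tauto

lemma patternsAbove_ones {ω : Fin s → Bool} (hω : wt ω = t) : patternsAbove t (ones ω) = {ω} := by
  ext ω'
  simp only [patternsAbove, mem_filter, mem_univ, true_and, mem_singleton]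
  constructor
  · rintro ⟨hwt, hsub⟩
    have : ones ω = ones ω' := eq_of_subset_of_card_le hsub (by rwa [card_ones, card_ones, hω])
    funext i
    simpa using (Finset.ext_iff.1 this i).symm
  · rintro rfl
    exact ⟨hω.le, subset_rfl⟩

end Patterns

section Gowers

variable {G : Type*} [AddCommGroup G] [Fintype G] {s : ℕ}

def gowersAvg (t : ℕ) (g : G → ℂ) : ℂ :=
  𝔼 x, 𝔼 k : Fin t → G, ∏ η : Fin t → Bool, cconj (wt η) (g (x + dot η k))

lemma expect_prod_powerset_eq_gowersAvg {T : Finset (Fin s)} {t : ℕ} (hT : #T = t) (g : G → ℂ) :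
    𝔼 x, 𝔼 k : Fin s → G, ∏ ε ∈ T.powerset, cconj #ε (g (x + ∑ j ∈ ε, k j)) = gowersAvg t g := by
  obtain ⟨e, rfl⟩ : ∃ e : Fin t ↪ Fin s, univ.map e = T :=
    ⟨(T.orderEmbOfFin hT).toEmbedding, map_orderEmbOfFin_univ T hT⟩
  simp only [prod_powerset_map_univ, card_map, sum_map, card_ones, ← dot_eq_sum_ones]
  refine expect_congr rfl fun x _ => ?_
  exact Fintype.expect_comp_of_injective e.injective
    (fun k => ∏ η : Fin t → Bool, cconj (wt η) (g (x + dot η k)))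

end Gowers

section Doubling

variable {G : Type*} [AddCommGroup G] {s : ℕ} (t : ℕ) (f : (Fin s → Bool) → G → ℂ)

def vertexProd (S : Finset (Fin s)) (x : G) (y : Fin s → G) : ℂ :=
  ∏ ω ∈ patternsAbove t S, f ω (x + dot ω y)

def vertexProdOff (S : Finset (Fin s)) (i : Fin s) (x : G) (y : Fin s → G) : ℂ :=
  ∏ ω ∈ (patternsAbove t S).filter (fun ω => ω i = false), f ω (x + dot ω y)

lemma vertexProd_eq_mul (S : Finset (Fin s)) (i : Fin s) (x : G) :
    vertexProd t f S x = vertexProdOff t f S i x * vertexProd t f (insert i S) x := by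
  ext y
  rw [Pi.mul_apply, vertexProd, vertexProd, vertexProdOff, patternsAbove_insert, mul_comm,
    ← prod_filter_mul_prod_filter_not _ (fun ω => ω i = true)]
  simp only [Bool.not_eq_true]

lemma vertexProdOff_update (S : Finset (Fin s)) (i : Fin s) (x : G) (y : Fin s → G) (v : G) :
    vertexProdOff t f S i x (update y i v) = vertexProdOff t f S i x y :=
  prod_congr rfl fun ω hω => by rw [dot_update_of_false (mem_filter.1 hω).2]

lemma norm_vertexProdOff_le_one (hf : ∀ ω : Fin s → Bool, wt ω ≤ t → ∀ x, ‖f ω x‖ ≤ 1)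
    (S : Finset (Fin s)) (i : Fin s) (x : G) (y : Fin s → G) :
    ‖vertexProdOff t f S i x y‖ ≤ 1 := by
  rw [vertexProdOff, norm_prod]
  exact prod_le_one (fun _ _ => norm_nonneg _) fun ω hω =>
    hf ω (mem_filter.1 (mem_filter.1 hω).1).2.1 _

variable [Fintype G]

def doubledAvg (S : Finset (Fin s)) : ℂ :=
  𝔼 x, 𝔼 h, 𝔼 h', cubeProd S (vertexProd t f S x) h h'

lemma doubledAvg_empty :
    doubledAvg t f ∅ = 𝔼 x, 𝔼 h, ∏ ω ∈ univ.filter (fun ω => wt ω ≤ t), f ω (x + dot ω h) := by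
  simp [doubledAvg, cubeProd_empty, vertexProd, patternsAbove]

variable {t f} {S : Finset (Fin s)} {i : Fin s}

lemma doubledAvg_eq_expect_mul (hi : i ∉ S) :
    doubledAvg t f S = 𝔼 x, 𝔼 h, 𝔼 h', cubeProd S (vertexProdOff t f S i x) h h' *
      𝔼 v, cubeProd S (vertexProd t f (insert i S) x) (update h i v) h' := by
  calc doubledAvg t f S = 𝔼 x, 𝔼 h, 𝔼 h', cubeProd S (vertexProdOff t f S i x) h h' *
        cubeProd S (vertexProd t f (insert i S) x) h h' := by
        simp only [doubledAvg, vertexProd_eq_mul t f S i, cubeProd_mul]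
    _ = 𝔼 x, 𝔼 h, 𝔼 v, 𝔼 h', cubeProd S (vertexProdOff t f S i x) h h' *
        cubeProd S (vertexProd t f (insert i S) x) (update h i v) h' := by
        refine expect_congr rfl fun x _ => ?_
        rw [← Fintype.expect_expect_update _ i]
        simp only [cubeProd_update_left hi (vertexProdOff_update t f S i x)]
    _ = _ := by
        refine expect_congr rfl fun x _ => expect_congr rfl fun h _ => ?_
        rw [expect_comm]
        simp only [mul_expect]

lemma doubledAvg_insert (hi : i ∉ S) :
    doubledAvg t f (insert i S) = 𝔼 x, 𝔼 h, 𝔼 h',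
      ((‖𝔼 v, cubeProd S (vertexProd t f (insert i S) x) (update h i v) h'‖ ^ 2 : ℝ) : ℂ) := by
  set B := fun x => cubeProd S (vertexProd t f (insert i S) x)
  calc doubledAvg t f (insert i S)
      = 𝔼 x, 𝔼 h, 𝔼 h', B x h h' * starRingEnd ℂ (B x (update h i (h' i)) h') := by
        simp only [doubledAvg, B, cubeProd_insert hi]
    _ = 𝔼 x, 𝔼 h, 𝔼 v, 𝔼 h', 𝔼 v',
          B x (update h i v) h' * starRingEnd ℂ (B x (update h i v') h') := by
        refine expect_congr rfl fun x _ => ?_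
        rw [← Fintype.expect_expect_update _ i]
        refine expect_congr rfl fun h _ => expect_congr rfl fun v _ => ?_
        rw [← Fintype.expect_expect_update _ i]
        simp only [update_idem, update_self, B, cubeProd_update_right hi]
    _ = _ := by
        refine expect_congr rfl fun x _ => expect_congr rfl fun h _ => ?_
        rw [expect_comm]
        refine expect_congr rfl fun h' _ => ?_
        rw [Complex.ofReal_pow, ← Complex.mul_conj', conj_expect, expect_mul_expect]

lemma norm_doubledAvg_sq_le (hf : ∀ ω : Fin s → Bool, wt ω ≤ t → ∀ x, ‖f ω x‖ ≤ 1)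
    (hi : i ∉ S) : ‖doubledAvg t f S‖ ^ 2 ≤ ‖doubledAvg t f (insert i S)‖ := by
  rw [doubledAvg_eq_expect_mul hi, doubledAvg_insert hi]
  simp only [← Complex.ofReal_expect, Complex.norm_real]
  rw [Real.norm_of_nonneg (by positivity)]
  refine (sq_norm_expect_le _).trans <| expect_le_expect fun x _ =>
    (sq_norm_expect_le _).trans <| expect_le_expect fun h _ =>
    (sq_norm_expect_le _).trans <| expect_le_expect fun h' _ => ?_
  rw [norm_mul]
  refine pow_le_pow_left₀ (by positivity) (mul_le_of_le_one_left (norm_nonneg _) ?_) 2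
  exact norm_cubeProd_le_one (norm_vertexProdOff_le_one t f hf S i x) h h'

variable (t f)

lemma norm_doubledAvg_pow_le (hf : ∀ ω : Fin s → Bool, wt ω ≤ t → ∀ x, ‖f ω x‖ ≤ 1)
    (S : Finset (Fin s)) : ‖doubledAvg t f ∅‖ ^ 2 ^ #S ≤ ‖doubledAvg t f S‖ := by
  induction S using Finset.induction_on with
  | empty => simp
  | insert i S hi ih =>
    calc ‖doubledAvg t f ∅‖ ^ 2 ^ #(insert i S) = (‖doubledAvg t f ∅‖ ^ 2 ^ #S) ^ 2 := by
          rw [card_insert_of_notMem hi, pow_succ, pow_mul]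
      _ ≤ ‖doubledAvg t f S‖ ^ 2 := pow_le_pow_left₀ (pow_nonneg (norm_nonneg _) _) ih 2
      _ ≤ ‖doubledAvg t f (insert i S)‖ := norm_doubledAvg_sq_le hf hi

lemma doubledAvg_ones {ω : Fin s → Bool} (hω : wt ω = t) :
    doubledAvg t f (ones ω) =
      𝔼 x, 𝔼 k : Fin s → G, ∏ ε ∈ (ones ω).powerset, cconj #ε (f ω (x + ∑ j ∈ ε, k j)) := by
  set Φ : G → (Fin s → G) → ℂ :=
    fun x k => ∏ ε ∈ (ones ω).powerset, cconj #ε (f ω (x + ∑ j ∈ ε, k j))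
  calc doubledAvg t f (ones ω) = 𝔼 x, 𝔼 h, 𝔼 h', Φ (x + dot ω h) (h' - h) := by
        refine expect_congr rfl fun x _ => expect_congr rfl fun h _ => expect_congr rfl
          fun h' _ => prod_congr rfl fun ε hε => ?_
        rw [vertexProd, patternsAbove_ones hω, prod_singleton,
          dot_piecewise (mem_powerset.1 hε), add_assoc]
        rfl
    _ = 𝔼 h, 𝔼 x, 𝔼 k, Φ x k := by
        rw [expect_comm]
        refine expect_congr rfl fun h _ => ?_
        calc 𝔼 x, 𝔼 h', Φ (x + dot ω h) (h' - h) = 𝔼 x, 𝔼 k, Φ (x + dot ω h) k :=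
              expect_congr rfl fun x _ => Fintype.expect_equiv (Equiv.subRight h) _ _ fun _ => rfl
          _ = 𝔼 x, 𝔼 k, Φ x k :=
              Fintype.expect_equiv (Equiv.addRight (dot ω h)) _ (fun x => 𝔼 k, Φ x k) fun _ => rfl
    _ = 𝔼 x, 𝔼 k, Φ x k := Fintype.expect_const _

theorem norm_pow_le_norm_gowersAvg (hf : ∀ ω : Fin s → Bool, wt ω ≤ t → ∀ x, ‖f ω x‖ ≤ 1)
    {ω' : Fin s → Bool} (hω' : wt ω' = t) :
    ‖𝔼 x, 𝔼 h, ∏ ω ∈ univ.filter (fun ω => wt ω ≤ t), f ω (x + dot ω h)‖ ^ 2 ^ t ≤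
      ‖gowersAvg t (f ω')‖ := by
  have key := norm_doubledAvg_pow_le t f hf (ones ω')
  rwa [card_ones, hω', doubledAvg_empty, doubledAvg_ones t f hω',
    expect_prod_powerset_eq_gowersAvg ((card_ones ω').trans hω')] at key

end Doubling

section ZMod

variable {N : ℕ} [NeZero N]

lemma expect_expect_eq_sum_sum_div (n : ℕ) (F : ZMod N → (Fin n → ZMod N) → ℂ) :
    𝔼 x, 𝔼 h, F x h = (∑ x, ∑ h, F x h) / (N : ℂ) ^ (n + 1) := by
  simp only [Fintype.expect_eq_sum_div_card, ← sum_div, Fintype.card_fun, ZMod.card,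
    Fintype.card_fin]
  push_cast
  rw [div_div, pow_succ]

lemma Lam1st_eq_expect (s t : ℕ) (f : (Fin s → Bool) → ZMod N → ℂ) :
    Lam1st s t f = 𝔼 x, 𝔼 h, ∏ ω ∈ univ.filter (fun ω => wt ω ≤ t), f ω (x + dot ω h) :=
  (expect_expect_eq_sum_sum_div s _).symm

lemma gowers_eq_norm_gowersAvg (t : ℕ) (g : ZMod N → ℂ) :
    gowers t g = ‖gowersAvg t g‖ ^ ((2 : ℝ) ^ t)⁻¹ := by
  rw [gowersAvg, expect_expect_eq_sum_sum_div]
  rfl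

end ZMod

theorem stmt8_general (N : ℕ) [NeZero N] (s t : ℕ)
    (f : (Fin s → Bool) → ZMod N → ℂ)
    (hf : ∀ ω : Fin s → Bool, wt ω ≤ t → ∀ x, norm (f ω x) ≤ 1)
    (ω' : Fin s → Bool) (hω' : wt ω' = t) :
    norm (Lam1st s t f) ≤ gowers t (f ω') := by
  rw [Lam1st_eq_expect, gowers_eq_norm_gowersAvg, Real.le_rpow_inv_iff_of_pos (norm_nonneg _)
    (norm_nonneg _) (by positivity)]
  exact_mod_cast norm_pow_le_norm_gowersAvg t f hf hω'

theorem stmt8 (N : ℕ) [NeZero N] (hN : Nat.Prime N) (s t : ℕ)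
    (ht : 1 ≤ t) (hts : t ≤ s)
    (f : (Fin s → Bool) → ZMod N → ℂ)
    (hf : ∀ ω : Fin s → Bool, wt ω ≤ t → ∀ x, norm (f ω x) ≤ 1)
    (ω' : Fin s → Bool) (hω' : wt ω' = t) :
    norm (Lam1st s t f) ≤ gowers t (f ω') :=
  stmt8_general N s t f hf ω' hω'

end
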